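/- Assume $\mathsf{F}:[0,T]\times\mathbb{R}^d\to\mathbb{R}^d$ is Lipschitz in the second variable with constant $L$, and $\mathsf{A}:[0,T]\times\mathbb{R}^d\to\mathbb{R}^{d\times d}$ satisfies the uniform bound $\|\mathsf{A}(t,u)x\|\le C_{\mathsf{A}}\|x\|$. Fix $u \in \mathcal{P}^{r_n}(I_n;\mathbb{R}^d)$ and suppose $k_n < (C_{\mathsf{A}} C_P)^{-1}$. Define $g: X_a^{r_n} \to X_a^{r_n}$ by $g(x) = x - [\mathsf{G}^n_{\mathsf{A}}(t,u)]^{-1}\mathsf{G}^n(t,x)$. Then for all $x,y \in X_a^{r_n}$: $\|g(x)-g(y)\|_{L^2(I_n;\mathbb{R}^d)} \le \frac{C_{\mathsf{A}}+L}{(k_n C_P)^{-1}-C_{\mathsf{A}}}\,\|x-y\|_{L^2(I_n;\mathbb{R}^d)}$. -/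

import Mathlib

open MeasureTheory Real
open scoped RealInnerProductSpace

abbrev E (d : ℕ) := EuclideanSpace ℝ (Fin d)

/-- The `L²` norm of a vector-valued function over the interval `(a,b)`. -/
noncomputable def L2norm {d : ℕ} (f : ℝ → E d) (a b : ℝ) : ℝ :=
  Real.sqrt (∫ t in a..b, ‖f t‖ ^ 2)

/-- `x : ℝ → ℝ^d` is (componentwise) a polynomial of degree at most `r`. -/
def IsPolyDeg {d : ℕ} (r : ℕ) (x : ℝ → E d) : Prop :=
  ∃ p : Fin d → Polynomial ℝ, (∀ i, (p i).natDegree ≤ r) ∧ ∀ t i, x t i = (p i).eval t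

/-!
Put `e = g x - g y` and `z = x - y`. Subtracting the defining relations of `g x` and `g y` and
testing with `φ = e'` gives `‖e'‖² = ∫ ⟪A (e - z) + F x - F y, e'⟫ ≤ (C_A ‖e‖ + (C_A + L) ‖z‖) ‖e'‖`
by Cauchy–Schwarz. As `e` vanishes at `t_{n-1}`, Poincaré gives `‖e‖ ≤ k C_P ‖e'‖`; eliminating
`‖e'‖` yields the bound, and `k C_A C_P < 1` makes the denominator positive.
-/

namespace IsPolyDeg

variable {d r : ℕ} {x y : ℝ → E d}

lemma eq_toLp {p : Fin d → Polynomial ℝ} (h : ∀ t i, x t i = (p i).eval t) :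
    x = fun t => WithLp.toLp 2 fun i => (p i).eval t := by
  funext t; ext i; exact h t i

lemma contDiff (h : IsPolyDeg r x) (n : WithTop ℕ∞) : ContDiff ℝ n x := by
  obtain ⟨p, -, hp⟩ := h
  rw [eq_toLp hp]
  exact (contDiff_piLp 2).2 fun i => (p i).contDiff_aeval n

lemma deriv (h : IsPolyDeg r x) : IsPolyDeg (r - 1) (deriv x) := by
  obtain ⟨p, hdeg, hp⟩ := h
  have hx (t : ℝ) : HasDerivAt x (WithLp.toLp 2 fun i => (p i).derivative.eval t) t := by
    rw [eq_toLp hp]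
    exact (PiLp.hasFDerivAt_toLp 2 _).comp_hasDerivAt t
      (hasDerivAt_pi.2 fun i => (p i).hasDerivAt t)
  refine ⟨fun i => (p i).derivative, fun i => (p i).natDegree_derivative_le.trans
    (Nat.sub_le_sub_right (hdeg i) 1), fun t i => ?_⟩
  rw [(hx t).deriv]

lemma sub (hx : IsPolyDeg r x) (hy : IsPolyDeg r y) : IsPolyDeg r fun t => x t - y t := by
  obtain ⟨p, hp, hpx⟩ := hx
  obtain ⟨q, hq, hqy⟩ := hy
  refine ⟨p - q, fun i => (Polynomial.natDegree_sub_le _ _).trans (max_le (hp i) (hq i)),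
    fun t i => ?_⟩
  simp [hpx, hqy]

lemma continuous (h : IsPolyDeg r x) : Continuous x :=
  (h.contDiff 0).continuous

end IsPolyDeg

section L2norm

variable {d : ℕ} {a b : ℝ}

lemma L2norm_sq (hab : a ≤ b) (f : ℝ → E d) : L2norm f a b ^ 2 = ∫ t in a..b, ‖f t‖ ^ 2 :=
  Real.sq_sqrt (intervalIntegral.integral_nonneg hab fun _ _ => sq_nonneg _)

lemma integral_norm_mul_norm_le_L2norm (hab : a ≤ b) {f g : ℝ → E d}
    (hf : Continuous f) (hg : Continuous g) :
    ∫ t in a..b, ‖f t‖ * ‖g t‖ ≤ L2norm f a b * L2norm g a b := by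
  have memLp {h : ℝ → E d} (hh : Continuous h) :
      MemLp (fun t => ‖h t‖) (ENNReal.ofReal 2) (volume.restrict (Set.Ioc a b)) := by
    rw [ENNReal.ofReal_ofNat, memLp_two_iff_integrable_sq hh.norm.aestronglyMeasurable]
    exact (hh.norm.pow 2).integrableOn_Ioc
  simp only [L2norm, intervalIntegral.integral_of_le hab, Real.sqrt_eq_rpow]
  simpa using integral_mul_le_Lp_mul_Lq_of_nonneg Real.HolderConjugate.two_two
    (Filter.Eventually.of_forall fun t => norm_nonneg (f t))
    (Filter.Eventually.of_forall fun t => norm_nonneg (g t)) (memLp hf) (memLp hg)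

lemma integral_inner_le_L2norm (hab : a ≤ b) {w e z φ : ℝ → E d} {α β : ℝ}
    (hα : 0 ≤ α) (hβ : 0 ≤ β) (hw : Continuous w) (he : Continuous e) (hz : Continuous z)
    (hφ : Continuous φ) (hwez : ∀ t, ‖w t‖ ≤ α * ‖e t‖ + β * ‖z t‖) :
    ∫ t in a..b, ⟪w t, φ t⟫ ≤ (α * L2norm e a b + β * L2norm z a b) * L2norm φ a b := by
  have hpointwise (t : ℝ) : ⟪w t, φ t⟫ ≤ α * (‖e t‖ * ‖φ t‖) + β * (‖z t‖ * ‖φ t‖) :=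
    calc ⟪w t, φ t⟫ ≤ ‖w t‖ * ‖φ t‖ := real_inner_le_norm _ _
      _ ≤ (α * ‖e t‖ + β * ‖z t‖) * ‖φ t‖ := by gcongr; exact hwez t
      _ = _ := by ring
  have hint {f : ℝ → ℝ} (hf : Continuous f) : IntervalIntegrable f volume a b :=
    hf.intervalIntegrable a b
  calc ∫ t in a..b, ⟪w t, φ t⟫
      ≤ ∫ t in a..b, (α * (‖e t‖ * ‖φ t‖) + β * (‖z t‖ * ‖φ t‖)) :=
        intervalIntegral.integral_mono_on hab (hint (by fun_prop)) (hint (by fun_prop))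
          fun t _ => hpointwise t
    _ = α * (∫ t in a..b, ‖e t‖ * ‖φ t‖) + β * ∫ t in a..b, ‖z t‖ * ‖φ t‖ := by
        rw [intervalIntegral.integral_add (hint (by fun_prop)) (hint (by fun_prop)),
          intervalIntegral.integral_const_mul, intervalIntegral.integral_const_mul]
    _ ≤ α * (L2norm e a b * L2norm φ a b) + β * (L2norm z a b * L2norm φ a b) := by
        gcongr
        · exact integral_norm_mul_norm_le_L2norm hab he hφ
        · exact integral_norm_mul_norm_le_L2norm hab hz hφ
    _ = _ := by ring

end L2norm

section WeakRelation

variable {d : ℕ} {a b : ℝ} {A : ℝ → E d →L[ℝ] E d} {x y gx gy fx fy φ : ℝ → E d}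

lemma integral_inner_residual_eq_zero (hA : Continuous A) (hx : ContDiff ℝ 1 x)
    (hgx : ContDiff ℝ 1 gx) (hfx : Continuous fx) (hφ : Continuous φ)
    (hrel : -(∫ t in a..b, (⟪deriv gx t - deriv x t, φ t⟫ - ⟪A t (gx t - x t), φ t⟫))
      = ∫ t in a..b, (⟪deriv x t, φ t⟫ - ⟪fx t, φ t⟫)) :
    ∫ t in a..b, ⟪deriv gx t - A t (gx t - x t) - fx t, φ t⟫ = 0 := by
  have := hx.continuous_deriv le_rfl
  have := hgx.continuous_deriv le_rfl
  have := hx.continuous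
  have := hgx.continuous
  rw [← add_eq_zero_iff_neg_eq.2 hrel, ← intervalIntegral.integral_add
    ((by fun_prop : Continuous _).intervalIntegrable a b)
    ((by fun_prop : Continuous _).intervalIntegrable a b)]
  congr 1 with t
  simp only [inner_sub_left]
  ring

lemma integral_inner_deriv_sub_eq (hA : Continuous A) (hx : ContDiff ℝ 1 x) (hy : ContDiff ℝ 1 y)
    (hgx : ContDiff ℝ 1 gx) (hgy : ContDiff ℝ 1 gy) (hfx : Continuous fx) (hfy : Continuous fy)
    (hφ : Continuous φ)
    (hrelx : -(∫ t in a..b, (⟪deriv gx t - deriv x t, φ t⟫ - ⟪A t (gx t - x t), φ t⟫))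
      = ∫ t in a..b, (⟪deriv x t, φ t⟫ - ⟪fx t, φ t⟫))
    (hrely : -(∫ t in a..b, (⟪deriv gy t - deriv y t, φ t⟫ - ⟪A t (gy t - y t), φ t⟫))
      = ∫ t in a..b, (⟪deriv y t, φ t⟫ - ⟪fy t, φ t⟫)) :
    ∫ t in a..b, ⟪deriv (fun s => gx s - gy s) t, φ t⟫
      = ∫ t in a..b, ⟪A t ((gx t - gy t) - (x t - y t)) + (fx t - fy t), φ t⟫ := by
  have hderiv (t : ℝ) : deriv (fun s => gx s - gy s) t = deriv gx t - deriv gy t :=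
    deriv_sub (hgx.differentiable one_ne_zero t) (hgy.differentiable one_ne_zero t)
  have := hx.continuous
  have := hy.continuous
  have := hgx.continuous
  have := hgy.continuous
  have := hgx.continuous_deriv le_rfl
  have := hgy.continuous_deriv le_rfl
  have hint {f : ℝ → ℝ} (hf : Continuous f) : IntervalIntegrable f volume a b :=
    hf.intervalIntegrable a b
  rw [← sub_eq_zero, ← intervalIntegral.integral_sub (hint (by fun_prop)) (hint (by fun_prop))]
  calc _ = (∫ t in a..b, ⟪deriv gx t - A t (gx t - x t) - fx t, φ t⟫)
        - ∫ t in a..b, ⟪deriv gy t - A t (gy t - y t) - fy t, φ t⟫ := by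
        rw [← intervalIntegral.integral_sub (hint (by fun_prop)) (hint (by fun_prop))]
        congr 1 with t
        simp only [hderiv, map_sub, inner_sub_left, inner_add_left]
        ring
    _ = 0 := by
        rw [integral_inner_residual_eq_zero hA hx hgx hfx hφ hrelx,
          integral_inner_residual_eq_zero hA hy hgy hfy hφ hrely, sub_zero]

end WeakRelation

lemma le_div_sub_mul_of_le_mul_of_sq_le {ne nφ nz c α β : ℝ} (hc : 0 < c) (hαc : α * c < 1)
    (hβ : 0 ≤ β) (hne : 0 ≤ ne) (hnz : 0 ≤ nz) (hP : ne ≤ c * nφ)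
    (hE : nφ ^ 2 ≤ (α * ne + β * nz) * nφ) :
    ne ≤ β / (c⁻¹ - α) * nz := by
  have hcoef : β / (c⁻¹ - α) = c * β / (1 - α * c) := by
    field_simp
  rw [hcoef, div_mul_eq_mul_div, le_div_iff₀ (by linarith)]
  rcases (show 0 ≤ nφ by nlinarith).eq_or_lt with h0 | hpos
  · subst h0
    nlinarith [mul_nonneg (mul_nonneg hc.le hβ) hnz]
  · have : nφ ≤ α * ne + β * nz := le_of_mul_le_mul_right (by nlinarith) hpos
    nlinarith

lemma mul_mul_lt_one_of_lt_inv {a b k : ℝ} (ha : 0 ≤ a) (hb : 0 < b) (hk : k < (a * b)⁻¹) :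
    a * (k * b) < 1 := by
  rcases ha.eq_or_lt with rfl | ha
  · simp
  · calc _ = a * b * k := by ring
      _ < 1 := (lt_inv_mul_iff₀ (mul_pos ha hb)).1 (by rwa [mul_one])

lemma norm_apply_sub_add_sub_le {V W : Type*} [SeminormedAddCommGroup V]
    [SeminormedAddCommGroup W] {T f : V → W} {C L : ℝ} (hC : 0 ≤ C)
    (hT : ∀ v, ‖T v‖ ≤ C * ‖v‖) (hf : ∀ v w, ‖f v - f w‖ ≤ L * ‖v - w‖) (e x y : V) :
    ‖T (e - (x - y)) + (f x - f y)‖ ≤ C * ‖e‖ + (C + L) * ‖x - y‖ :=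
  calc _ ≤ ‖T (e - (x - y))‖ + ‖f x - f y‖ := norm_add_le _ _
    _ ≤ C * ‖e - (x - y)‖ + L * ‖x - y‖ := add_le_add (hT _) (hf _ _)
    _ ≤ C * (‖e‖ + ‖x - y‖) + L * ‖x - y‖ := by gcongr; exact norm_sub_le _ _
    _ = _ := by ring

/-- Lipschitz estimate for the linearized fixed point map
`g(x) = x - [Gₐ(t,u)]⁻¹ G(t,x)` on `X_a = {x ∈ P^{rₙ} : x(tₙ₋₁) = a}`:
`‖g(x)-g(y)‖ ≤ (C_A + L)/((kₙ C_P)⁻¹ - C_A) ‖x-y‖` in `L²(Iₙ)`.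
The map `g` is characterized by its defining relation `-⟨Gₐ(t,u)(g(x)-x), φ⟩ = ⟨G(t,x), φ⟩`. -/
theorem g_lipschitz {d : ℕ} (tp tn : ℝ) (htn : tp < tn) (rn : ℕ)
    (F : ℝ → E d → E d) (L : ℝ) (hL : 0 ≤ L)
    (hFcont : Continuous fun p : ℝ × E d => F p.1 p.2)
    (hFlip : ∀ (t : ℝ) (v w : E d), ‖F t v - F t w‖ ≤ L * ‖v - w‖)
    (A : ℝ → E d → (E d →L[ℝ] E d)) (C_A : ℝ) (hCA : 0 ≤ C_A)
    (hAbound : ∀ (t : ℝ) (v x : E d), ‖A t v x‖ ≤ C_A * ‖x‖)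
    (hAcont : Continuous fun p : ℝ × E d => A p.1 p.2)
    (C_P : ℝ) (hCP : 0 < C_P)
    (hPoincare : ∀ y : ℝ → E d, IsPolyDeg rn y → y tp = 0 →
      L2norm y tp tn ≤ (tn - tp) * C_P * L2norm (deriv y) tp tn)
    (hk : tn - tp < (C_A * C_P)⁻¹)
    (u : ℝ → E d) (hu : IsPolyDeg rn u) (a : E d)
    (g : (ℝ → E d) → (ℝ → E d))
    (hg : ∀ x : ℝ → E d, IsPolyDeg rn x → x tp = a →
      IsPolyDeg rn (g x) ∧ g x tp = a ∧
      ∀ φ : ℝ → E d, IsPolyDeg (rn - 1) φ →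
        (-(∫ t in tp..tn, (⟪deriv (g x) t - deriv x t, φ t⟫
              - ⟪A t (u t) (g x t - x t), φ t⟫))
          = ∫ t in tp..tn, (⟪deriv x t, φ t⟫ - ⟪F t (x t), φ t⟫))) :
    ∀ x y : ℝ → E d, IsPolyDeg rn x → x tp = a → IsPolyDeg rn y → y tp = a →
      L2norm (fun t => g x t - g y t) tp tn
        ≤ ((C_A + L) / (((tn - tp) * C_P)⁻¹ - C_A)) * L2norm (fun t => x t - y t) tp tn := by
  intro x y hx hxa hy hya
  obtain ⟨hgx, hgxa, hrelx⟩ := hg x hx hxa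
  obtain ⟨hgy, hgya, hrely⟩ := hg y hy hya
  set e : ℝ → E d := fun t => g x t - g y t
  set z : ℝ → E d := fun t => x t - y t
  have he : IsPolyDeg rn e := hgx.sub hgy
  have hAu : Continuous fun t => A t (u t) := hAcont.comp (continuous_id.prodMk hu.continuous)
  have hFcomp {v : ℝ → E d} (hv : IsPolyDeg rn v) : Continuous fun t => F t (v t) :=
    hFcont.comp (continuous_id.prodMk hv.continuous)
  have henergy : ∫ t in tp..tn, ⟪deriv e t, deriv e t⟫
      = ∫ t in tp..tn, ⟪A t (u t) (e t - z t) + (F t (x t) - F t (y t)), deriv e t⟫ :=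
    integral_inner_deriv_sub_eq hAu (hx.contDiff 1) (hy.contDiff 1) (hgx.contDiff 1)
      (hgy.contDiff 1) (hFcomp hx) (hFcomp hy) he.deriv.continuous (hrelx _ he.deriv)
      (hrely _ he.deriv)
  have hbound (t : ℝ) : ‖A t (u t) (e t - z t) + (F t (x t) - F t (y t))‖
      ≤ C_A * ‖e t‖ + (C_A + L) * ‖z t‖ :=
    norm_apply_sub_add_sub_le hCA (hAbound t (u t)) (hFlip t) (e t) (x t) (y t)
  refine le_div_sub_mul_of_le_mul_of_sq_le (mul_pos (sub_pos.2 htn) hCP)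
    (mul_mul_lt_one_of_lt_inv hCA hCP hk) (add_nonneg hCA hL) (Real.sqrt_nonneg _)
    (Real.sqrt_nonneg _) (hPoincare e he (by simp [e, hgxa, hgya])) ?_
  calc L2norm (deriv e) tp tn ^ 2 = ∫ t in tp..tn, ⟪deriv e t, deriv e t⟫ := by
        simp only [L2norm_sq htn.le, real_inner_self_eq_norm_sq]
    _ = _ := henergy
    _ ≤ _ := integral_inner_le_L2norm htn.le hCA (add_nonneg hCA hL)
        ((hAu.clm_apply (he.continuous.sub (hx.sub hy).continuous)).add
          ((hFcomp hx).sub (hFcomp hy))) he.continuous (hx.sub hy).continuous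
        he.deriv.continuous hbound
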